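/- Let n ≥ 2. If ¬□^n ψ is valid in a (0,n)-accessible N-model M, then ¬□^{n+1} ψ is also valid in M. -/
import Mathlib


inductive Formula : Type
  | bot : Formula
  | var : ℕ → Formula
  | neg : Formula → Formula
  | or : Formula → Formula → Formula
  | box : Formula → Formula
  deriving DecidableEq

namespace Formula

def imp (φ ψ : Formula) : Formula := .or (.neg φ) ψ

def and (φ ψ : Formula) : Formula := .neg (.or (.neg φ) (.neg ψ))

/-- □^n φ -/
def boxn : ℕ → Formula → Formula
  | 0, φ => φ
  | k+1, φ => .box (boxn k φ)

/-- the set of subformulas -/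
def sub : Formula → Finset Formula
  | .bot => {.bot}
  | .var p => {.var p}
  | .neg φ => insert (.neg φ) φ.sub
  | .or φ ψ => insert (.or φ ψ) (φ.sub ∪ ψ.sub)
  | .box φ => insert (.box φ) φ.sub

/-- ∼ρ -/
def negg : Formula → Formula
  | .neg φ => φ
  | φ => .neg φ

end Formula

def NSub (ψ : Formula) : Finset Formula := ψ.sub ∪ ψ.sub.image Formula.negg

/-- boolean evaluation treating boxed formulas and variables as atoms -/
def evalP (v : Formula → Bool) : Formula → Bool
  | .bot => false
  | .var p => v (.var p)
  | .neg φ => !(evalP v φ)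
  | .or φ ψ => evalP v φ || evalP v ψ
  | .box φ => v (.box φ)

/-- propositional tautologies in the modal language -/
def Tautology (φ : Formula) : Prop := ∀ v, evalP v φ = true

/-- Provability in NA_{m,n} (ros = false) and NRA_{m,n} (ros = true):
    propositional tautologies, the scheme □^n φ → □^m φ, modus ponens,
    necessitation, and (if ros) the rule Ros^□ : ¬□φ / ¬□□φ. -/
inductive Prov (m n : ℕ) (ros : Bool) : Formula → Prop
  | taut {φ} : Tautology φ → Prov m n ros φ
  | axA (φ) : Prov m n ros ((Formula.boxn n φ).imp (Formula.boxn m φ))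
  | mp {φ ψ} : Prov m n ros (φ.imp ψ) → Prov m n ros φ → Prov m n ros ψ
  | nec {φ} : Prov m n ros φ → Prov m n ros (.box φ)
  | ros {φ} : ros = true → Prov m n ros (.neg (.box φ)) →
      Prov m n ros (.neg (.box (.box φ)))

/-- An N-frame on world set W: a binary relation R_φ for each formula φ. -/
abbrev NFrame (W : Type) := Formula → W → W → Prop

structure NModel (W : Type) where
  Rel : NFrame W
  V : W → ℕ → Prop

/-- satisfaction in an N-model -/
def Sat {W : Type} (M : NModel W) : W → Formula → Prop
  | _, .bot => False
  | w, .var p => M.V w p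
  | w, .neg φ => ¬ Sat M w φ
  | w, .or φ ψ => Sat M w φ ∨ Sat M w ψ
  | w, .box φ => ∀ w', M.Rel φ w w' → Sat M w' φ

/-- x R_φ^k y : there is a φ-path of length k from x to y -/
def FPath {W : Type} (R : NFrame W) (φ : Formula) : ℕ → W → W → Prop
  | 0, x, y => x = y
  | k+1, x, y => ∃ w, R (Formula.boxn k φ) x w ∧ FPath R φ k w y

/-- (m,n)-accessibility for φ -/
def AccFor {W : Type} (R : NFrame W) (m n : ℕ) (φ : Formula) : Prop :=
  ∀ x y, FPath R φ m x y → FPath R φ n x y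

/-- Γ-(m,n)-accessibility -/
def SubAcc {W : Type} (R : NFrame W) (m n : ℕ) (Γ : Finset Formula) : Prop :=
  ∀ φ, Formula.boxn m φ ∈ Γ → AccFor R m n φ

/-- (m,n)-accessibility -/
def Accessible {W : Type} (R : NFrame W) (m n : ℕ) : Prop :=
  ∀ φ, AccFor R m n φ

def ValidM {W : Type} (M : NModel W) (ψ : Formula) : Prop := ∀ w, Sat M w ψ

def ValidF {W : Type} (R : NFrame W) (ψ : Formula) : Prop :=
  ∀ V : W → ℕ → Prop, ValidM ⟨R, V⟩ ψ



theorem boxn_box (k : ℕ) (φ : Formula) :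
    Formula.boxn k (.box φ) = Formula.boxn (k + 1) φ := by
  induction k with
  | zero => rfl
  | succ k ih => simp [Formula.boxn, ih]

theorem stmt6 (n : ℕ) (hn : 2 ≤ n) {W : Type} (M : NModel W)
    (hacc : Accessible M.Rel 0 n) (ψ : Formula)
    (h : ValidM M (.neg (Formula.boxn n ψ))) :
    ValidM M (.neg (Formula.boxn (n + 1) ψ)) := by
  intro w hw
  obtain ⟨k, rfl⟩ : ∃ k, n = k + 1 := ⟨n - 1, by omega⟩
  obtain ⟨w₁, hR, -⟩ := hacc (.box ψ) w w rfl
  rw [boxn_box] at hR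
  exact h w₁ (hw w₁ hR)
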